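/- arXiv:math/0403166 — 7 statements merged into one kernel-verified Lean document; each statement's English description precedes it below -/
import Mathlib

section
/- Let 𝒳 be a strongly connected directed graph. For a vertex a, define the loop number at a to be the minimum of the differences |p| − |q| over all pairs of closed walks p, q at a with |p| > |q|, and 0 if there is no closed walk of length ≥ 1 at a. Then the loop number at a is the same for every vertex a of 𝒳, so the loop number of 𝒳 is a well-defined number. -/
/-- `hasWalk E m a b` means there is a walk of length `m` from `a` to `b`
in the directed graph with edge relation `E` (walks of length 0 allowed). -/
def hasWalk {V : Type*} (E : V → V → Prop) : ℕ → V → V → Prop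
  | 0 => fun a b => a = b
  | m + 1 => fun a b => ∃ c, E a c ∧ hasWalk E m c b

/-- A directed graph is strongly connected if there is a walk between any
two vertices. -/
def StronglyConnected {V : Type*} (E : V → V → Prop) : Prop :=
  ∀ a b : V, ∃ m, hasWalk E m a b

/-- The loop number at a vertex `a`: the minimum `t ≥ 1` arising as the
difference of lengths of two closed walks at `a`, and `0` if there is no
closed walk of length `≥ 1` at `a` (so no such difference exists). -/
noncomputable def loopNumAt {V : Type*} (E : V → V → Prop) (a : V) : ℕ :=
  sInf {t | 1 ≤ t ∧ ∃ p q, hasWalk E p a a ∧ hasWalk E q a a ∧ p = q + t}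

/-- Evaluation of a monomial coordinate function: `none` is the constant 0,
`some S` is the square-free monomial `∏ j ∈ S, x j` (empty product = 1). -/
def monEval {ι : Type*} (c : Option (Finset ι)) (x : ι → ZMod 2) : ZMod 2 :=
  match c with
  | none => 0
  | some S => ∏ j ∈ S, x j

/-- The Boolean monomial system determined by the coordinate data `M`. -/
def sysEval {ι : Type*} (M : ι → Option (Finset ι)) (x : ι → ZMod 2) : ι → ZMod 2 :=
  fun i => monEval (M i) x

/-- Edge relation of the dependency graph of a Boolean monomial system:
`i → j` iff `f i ≠ 0` and `x j` is a factor of `f i`. -/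
def depEdge {ι : Type*} (M : ι → Option (Finset ι)) (i j : ι) : Prop :=
  ∃ S, M i = some S ∧ j ∈ S

/-- A map is a fixed point system if every trajectory reaches a fixed point. -/
def FixedPointSystem {α : Type*} (F : α → α) : Prop :=
  ∀ a, ∃ m, F^[m + 1] a = F^[m] a

/-- A glueing of the Boolean monomial system `M₂` (in variables `y`) to the
Boolean monomial system `M₁` (in variables `x`): the `x`-coordinates are
those of `M₁`, and the `i`-th `y`-coordinate is `g i` multiplied by the
monomial in the `x`-variables given by `T i` (and is `0` when `g i = 0`). -/
def glue {r s : ℕ} (M₁ : Fin r → Option (Finset (Fin r)))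
    (M₂ : Fin s → Option (Finset (Fin s))) (T : Fin s → Finset (Fin r)) :
    (Fin r ⊕ Fin s) → Option (Finset (Fin r ⊕ Fin s))
  | .inl i => (M₁ i).map (Finset.image Sum.inl)
  | .inr i => (M₂ i).map (fun S => S.image Sum.inr ∪ (T i).image Sum.inl)

lemma hasWalk_trans {V : Type*} (E : V → V → Prop) :
    ∀ {m n : ℕ} {a b c : V}, hasWalk E m a b → hasWalk E n b c →
      hasWalk E (m + n) a c := by
  intro m
  induction m with
  | zero => intro n a b c h1 h2; cases h1; simpa using h2
  | succ m ih =>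
    intro n a b c h1 h2
    obtain ⟨d, hd, hw⟩ := h1
    rw [Nat.succ_add]
    exact ⟨d, hd, ih hw h2⟩

lemma loopSet_subset {V : Type*} (E : V → V → Prop) (h : StronglyConnected E)
    (a b : V) :
    {t | 1 ≤ t ∧ ∃ p q, hasWalk E p a a ∧ hasWalk E q a a ∧ p = q + t} ⊆
    {t | 1 ≤ t ∧ ∃ p q, hasWalk E p b b ∧ hasWalk E q b b ∧ p = q + t} := by
  rintro t ⟨ht, p, q, hp, hq, hpq⟩
  obtain ⟨m, hm⟩ := h b a
  obtain ⟨n, hn⟩ := h a b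
  refine ⟨ht, m + p + n, m + q + n, ?_, ?_, by omega⟩
  · exact hasWalk_trans E (hasWalk_trans E hm hp) hn
  · exact hasWalk_trans E (hasWalk_trans E hm hq) hn

/-- On a strongly connected directed graph, the loop number at a
vertex is the same for every vertex, so the loop number of the graph is a
well-defined number. -/
theorem statement3 {V : Type*} (E : V → V → Prop) (h : StronglyConnected E) :
    ∀ a b : V, loopNumAt E a = loopNumAt E b := by
  intro a b
  unfold loopNumAt
  congr 1
  exact Set.Subset.antisymm (loopSet_subset E h a b) (loopSet_subset E h b a)
end

section
/- Let f be a Boolean monomial system whose dependency graph is strongly connected with loop number t ≥ 1, and let P ⊆ 𝔽₂ⁿ be the set of periodic points of f (points a with f^N(a) = a for some N ≥ 1). Then f maps P bijectively to itself, and the restriction of f to P is conjugate to the cyclic shift σ : 𝔽₂^t → 𝔽₂^t, σ(y_1, …, y_t) = (y_2, …, y_t, y_1): there is a bijection φ : 𝔽₂^t → P with f ∘ φ = φ ∘ σ. -/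
/- ===== auxiliary lemmas for statement9 ===== -/

lemma hasWalk_append {V : Type*} {E : V → V → Prop} {p q : ℕ} {a b c : V}
    (h1 : hasWalk E p a b) (h2 : hasWalk E q b c) : hasWalk E (p + q) a c := by
  induction p generalizing a with
  | zero => rw [show a = b from h1]; simpa using h2
  | succ m ih =>
    obtain ⟨d, hd, hw⟩ := h1
    rw [Nat.succ_add]
    exact ⟨d, hd, ih hw⟩

lemma hasWalk_mul {V : Type*} {E : V → V → Prop} {q : ℕ} {a : V}
    (h : hasWalk E q a a) (x : ℕ) : hasWalk E (x * q) a a := by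
  induction x with
  | zero => rw [Nat.zero_mul]; exact rfl
  | succ m ih => rw [Nat.succ_mul]; exact hasWalk_append ih h

lemma walk_head {V : Type*} {E : V → V → Prop} {p : ℕ} {a b : V}
    (h : hasWalk E p a b) (hp : 1 ≤ p) : ∃ c, E a c := by
  cases p with
  | zero => omega
  | succ m => obtain ⟨c, hc, _⟩ := h; exact ⟨c, hc⟩

lemma loopNum_mem {V : Type*} {E : V → V → Prop} {a : V} {t : ℕ} (ht : 1 ≤ t)
    (hl : loopNumAt E a = t) :
    ∃ p q, hasWalk E p a a ∧ hasWalk E q a a ∧ p = q + t := by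
  have hne : {d | 1 ≤ d ∧ ∃ p q, hasWalk E p a a ∧ hasWalk E q a a ∧ p = q + d}.Nonempty := by
    by_contra h
    rw [Set.not_nonempty_iff_eq_empty] at h
    rw [loopNumAt, h, Nat.sInf_empty] at hl
    omega
  have h2 : t ∈ {d | 1 ≤ d ∧ ∃ p q, hasWalk E p a a ∧ hasWalk E q a a ∧ p = q + d} := by
    rw [← hl]; exact Nat.sInf_mem hne
  exact h2.2

lemma loop_dvd_closed {V : Type*} {E : V → V → Prop} {a : V} {t : ℕ} (ht : 1 ≤ t)
    (hl : loopNumAt E a = t) {p : ℕ} (hp : hasWalk E p a a) : t ∣ p := by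
  set D : Set ℕ := {d | 1 ≤ d ∧ ∃ p q, hasWalk E p a a ∧ hasWalk E q a a ∧ p = q + d} with hD
  have hne : D.Nonempty := by
    by_contra h
    rw [Set.not_nonempty_iff_eq_empty] at h
    have : loopNumAt E a = 0 := by rw [loopNumAt, ← hD, h, Nat.sInf_empty]
    omega
  have htD : t ∈ D := by rw [← hl]; exact Nat.sInf_mem hne
  have hmin : ∀ d ∈ D, t ≤ d := fun d hd => hl ▸ Nat.sInf_le hd
  have hdvd : ∀ d, d ∈ D → t ∣ d := by
    intro d
    induction d using Nat.strong_induction_on with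
    | _ d ih =>
      intro hd
      by_cases hdt : d = t
      · exact hdt ▸ dvd_refl t
      · have hlt : t < d := lt_of_le_of_ne (hmin d hd) (Ne.symm hdt)
        obtain ⟨hd1, p1, q1, hp1, hq1, he1⟩ := hd
        obtain ⟨ht1, p2, q2, hp2, hq2, he2⟩ := htD
        have hmem : d - t ∈ D := by
          refine ⟨by omega, p1 + q2, q1 + p2, hasWalk_append hp1 hq2,
            hasWalk_append hq1 hp2, by omega⟩
        obtain ⟨k, hk⟩ := ih (d - t) (by omega) hmem
        exact ⟨k + 1, by rw [Nat.mul_succ, ← hk]; omega⟩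
  rcases Nat.eq_zero_or_pos p with h0 | h1
  · exact h0 ▸ dvd_zero t
  · exact hdvd p ⟨h1, p + p, p, hasWalk_append hp hp, hp, rfl⟩

lemma frob (u z : ℕ) (hz : u * u ≤ z) : ∃ x y, z = x * u + y * (u + 1) := by
  rcases Nat.eq_zero_or_pos u with h | h
  · exact ⟨0, z, by simp [h]⟩
  · have h1 : z % u < u := Nat.mod_lt _ h
    have h3 : u ≤ z / u := (Nat.le_div_iff_mul_le h).2 hz
    obtain ⟨k, hk⟩ := Nat.le.dest (le_trans h1.le h3)
    refine ⟨k, z % u, ?_⟩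
    have h2 := Nat.div_add_mod z u
    rw [← hk] at h2
    ring_nf at h2 ⊢
    nlinarith [h2]

lemma zmod2_cases (x : ZMod 2) : x = 0 ∨ x = 1 := by revert x; decide

lemma prod_eq_one_iff2 {ι : Type*} (S : Finset ι) (g : ι → ZMod 2) :
    ∏ j ∈ S, g j = 1 ↔ ∀ j ∈ S, g j = 1 := by
  constructor
  · intro h j hj
    rcases zmod2_cases (g j) with h0 | h1
    · rw [Finset.prod_eq_zero hj h0] at h
      exact absurd h (by decide)
    · exact h1
  · exact Finset.prod_eq_one

lemma iterate_one_iff {n : ℕ} (M : Fin n → Option (Finset (Fin n)))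
    (hS : ∀ i, ∃ S, M i = some S) (m : ℕ) (a : Fin n → ZMod 2) (i : Fin n) :
    (sysEval M)^[m] a i = 1 ↔ ∀ j, hasWalk (depEdge M) m i j → a j = 1 := by
  induction m generalizing i with
  | zero =>
    simp only [Function.iterate_zero, id_eq]
    exact ⟨fun h j hj => (show i = j from hj) ▸ h, fun h => h i rfl⟩
  | succ m ih =>
    rw [Function.iterate_succ_apply']
    obtain ⟨S, hSi⟩ := hS i
    have hprod : sysEval M ((sysEval M)^[m] a) i = ∏ j ∈ S, (sysEval M)^[m] a j := by
      simp [sysEval, hSi, monEval]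
    rw [hprod, prod_eq_one_iff2]
    constructor
    · rintro h j ⟨c, ⟨S', hS', hcS'⟩, hw⟩
      rw [hSi] at hS'
      have hc : c ∈ S := by cases hS'; exact hcS'
      exact (ih c).1 (h c hc) j hw
    · intro h j hj
      rw [ih]
      intro k hk
      exact h k ⟨j, ⟨S, hSi, hj⟩, hk⟩

/-- The cyclic shift on `𝔽₂^t`. -/
def cshift {t : ℕ} (y : Fin t → ZMod 2) : Fin t → ZMod 2 :=
  fun i => y ⟨(i.val + 1) % t, Nat.mod_lt _ i.pos⟩

lemma cshift_iterate {t : ℕ} (k : ℕ) (y : Fin t → ZMod 2) (c : Fin t) :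
    cshift^[k] y c = y ⟨(c.val + k) % t, Nat.mod_lt _ c.pos⟩ := by
  induction k generalizing y with
  | zero =>
    simp only [Function.iterate_zero, id_eq]
    congr 1
    exact Fin.ext (by simp [Nat.mod_eq_of_lt c.isLt])
  | succ k ih =>
    rw [Function.iterate_succ_apply, ih]
    show y ⟨(((c.val + k) % t + 1)) % t, _⟩ = _
    congr 1
    apply Fin.ext
    show ((c.val + k) % t + 1) % t = (c.val + (k + 1)) % t
    rw [Nat.mod_add_mod, Nat.add_assoc]

lemma cshift_t {t : ℕ} (y : Fin t → ZMod 2) : cshift^[t] y = y := by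
  funext c
  rw [cshift_iterate]
  congr 1
  exact Fin.ext (by simp [Nat.add_mod_right, Nat.mod_eq_of_lt c.isLt])

/-- If the dependency graph of a Boolean monomial system is
strongly connected with loop number `t ≥ 1`, then `f` maps its set `P` of
periodic points bijectively to itself, and the restriction of `f` to `P` is
conjugate to the cyclic shift on `𝔽₂^t`: there is a bijection
`φ : 𝔽₂^t → P` with `f ∘ φ = φ ∘ σ`. -/
theorem statement9 {n : ℕ} (hn : 1 ≤ n) (M : Fin n → Option (Finset (Fin n)))
    (hsc : StronglyConnected (depEdge M)) (t : ℕ) (ht : 1 ≤ t)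
    (hloop : ∀ a, loopNumAt (depEdge M) a = t) :
    Set.BijOn (sysEval M)
        {a | ∃ N, 1 ≤ N ∧ (sysEval M)^[N] a = a}
        {a | ∃ N, 1 ≤ N ∧ (sysEval M)^[N] a = a} ∧
      ∃ φ : (Fin t → ZMod 2) → (Fin n → ZMod 2),
        Function.Injective φ ∧
        Set.range φ = {a | ∃ N, 1 ≤ N ∧ (sysEval M)^[N] a = a} ∧
        ∀ y : Fin t → ZMod 2,
          sysEval M (φ y) = φ (fun i => y ⟨(i.val + 1) % t, Nat.mod_lt _ i.pos⟩) := by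
  classical
  have hsc' : ∀ a b, ∃ m, hasWalk (depEdge M) m a b := hsc
  have ht0 : 0 < t := ht
  -- every coordinate is a nonempty monomial
  have hSne : ∀ i, ∃ S, M i = some S ∧ S.Nonempty := by
    intro i
    obtain ⟨p, q, hp, hq, hpq⟩ := loopNum_mem ht (hloop i)
    obtain ⟨c, S, hMS, hcS⟩ := walk_head hp (by omega)
    exact ⟨S, hMS, ⟨c, hcS⟩⟩
  have hS : ∀ i, ∃ S, M i = some S := fun i =>
    ⟨(hSne i).choose, (hSne i).choose_spec.1⟩
  set v0 : Fin n := ⟨0, by omega⟩ with hv0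
  choose dist hdist using hsc' v0
  have hdvd : ∀ (a : Fin n) (p : ℕ), hasWalk (depEdge M) p a a → t ∣ p :=
    fun a p hp => loop_dvd_closed ht (hloop a) hp
  have hmod : ∀ i m m', hasWalk (depEdge M) m v0 i → hasWalk (depEdge M) m' v0 i →
      m % t = m' % t := by
    intro i m m' h1 h2
    obtain ⟨r, hr⟩ := hsc' i v0
    have d1 : t ∣ m + r := hdvd v0 _ (hasWalk_append h1 hr)
    have d2 : t ∣ m' + r := hdvd v0 _ (hasWalk_append h2 hr)
    have e1 : (m + r) ≡ (m' + r) [MOD t] :=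
      ((Nat.modEq_zero_iff_dvd).2 d1).trans ((Nat.modEq_zero_iff_dvd).2 d2).symm
    exact Nat.ModEq.add_right_cancel' r e1
  -- the level function
  have hLsurj0 : ∀ m i, ∃ j, hasWalk (depEdge M) m i j := by
    intro m
    induction m with
    | zero => exact fun i => ⟨i, rfl⟩
    | succ m ih =>
      intro i
      obtain ⟨S, hMS, c, hcS⟩ := hSne i
      obtain ⟨j, hj⟩ := ih c
      exact ⟨j, c, ⟨S, hMS, hcS⟩, hj⟩
  refine ?_
  let L : Fin n → Fin t := fun i => ⟨dist i % t, Nat.mod_lt _ ht0⟩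
  have hLdef : ∀ i, (L i).val = dist i % t := fun i => rfl
  have hLval : ∀ i m, hasWalk (depEdge M) m v0 i → (L i).val = m % t :=
    fun i m h => hmod i (dist i) m (hdist i) h
  have hedge : ∀ i j, depEdge M i j → (L j).val = ((L i).val + 1) % t := by
    intro i j hij
    have hw : hasWalk (depEdge M) (dist i + 1) v0 j :=
      hasWalk_append (hdist i) ⟨j, hij, rfl⟩
    rw [hLdef, hLdef, Nat.mod_add_mod]
    exact hmod j (dist j) (dist i + 1) (hdist j) hw
  have hLsurj : ∀ c : Fin t, ∃ i, L i = c := by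
    intro c
    obtain ⟨i, hi⟩ := hLsurj0 c.val v0
    refine ⟨i, Fin.ext ?_⟩
    rw [hLdef, hmod i (dist i) c.val (hdist i) hi]
    exact Nat.mod_eq_of_lt c.isLt
  have hwdvd : ∀ i j w, L i = L j → hasWalk (depEdge M) w i j → t ∣ w := by
    intro i j w hLij hw
    have h1 : (dist i + w) % t = dist j % t :=
      hmod j _ _ (hasWalk_append (hdist i) hw) (hdist j)
    have h2 : dist i % t = dist j % t := by
      rw [← hLdef, ← hLdef, hLij]
    have e3 : (dist i + w) ≡ (dist i + 0) [MOD t] := by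
      show (dist i + w) % t = (dist i + 0) % t
      rw [h1, Nat.add_zero, h2]
    have e4 : w ≡ 0 [MOD t] := Nat.ModEq.add_left_cancel' (dist i) e3
    exact (Nat.modEq_zero_iff_dvd).1 e4
  -- Frobenius-type lemma: all long walks of length divisible by t exist
  have hG : ∀ i j, L i = L j → ∃ B, ∀ m, B ≤ m → hasWalk (depEdge M) (t * m) i j := by
    intro i j hLij
    obtain ⟨w, hw⟩ := hsc' i j
    obtain ⟨w', hw'⟩ := hwdvd i j w hLij hw
    obtain ⟨p, q, hp, hq, hpq⟩ := loopNum_mem ht (hloop j)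
    obtain ⟨u, hu⟩ := hdvd j q hq
    refine ⟨w' + u * u, fun m hm => ?_⟩
    obtain ⟨z, hz⟩ := Nat.le.dest (show w' ≤ m by omega)
    obtain ⟨x, y, hxy⟩ := frob u z (by omega)
    have hlen : t * m = w + (x * q + y * p) := by
      rw [hpq, hu, hw', ← hz, hxy]; ring
    rw [hlen]
    exact hasWalk_append hw (hasWalk_append (hasWalk_mul hq x) (hasWalk_mul hp y))
  -- on periodic points, coordinates in the same level class agree
  have hPeq1 : ∀ (a : Fin n → ZMod 2) (N : ℕ), 1 ≤ N → (sysEval M)^[N] a = a →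
      ∀ i j, L i = L j → a i = 1 → a j = 1 := by
    intro a N hN hfix i j hLij hai
    obtain ⟨B, hB⟩ := hG i j hLij
    have hiter : (sysEval M)^[N * (t * (B + 1))] a = a := by
      rw [Function.iterate_mul]
      exact Function.iterate_fixed hfix _
    have hwalk : hasWalk (depEdge M) (t * (N * (B + 1))) i j := by
      refine hB _ ?_
      have : 1 * (B + 1) ≤ N * (B + 1) := Nat.mul_le_mul_right _ hN
      omega
    have h1 : (sysEval M)^[t * (N * (B + 1))] a i = 1 := by
      rw [show t * (N * (B + 1)) = N * (t * (B + 1)) by ring, hiter]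
      exact hai
    exact (iterate_one_iff M hS _ a i).1 h1 j hwalk
  have hPeq : ∀ (a : Fin n → ZMod 2), (∃ N, 1 ≤ N ∧ (sysEval M)^[N] a = a) →
      ∀ i j, L i = L j → a i = a j := by
    intro a ha i j hLij
    obtain ⟨N, hN, hfix⟩ := ha
    rcases zmod2_cases (a i) with h0 | h1
    · rcases zmod2_cases (a j) with g0 | g1
      · rw [h0, g0]
      · exfalso
        have := hPeq1 a N hN hfix j i hLij.symm g1
        rw [h0] at this
        exact absurd this (by decide)
    · rw [h1, hPeq1 a N hN hfix i j hLij h1]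
  -- the conjugacy
  have hconj : ∀ y : Fin t → ZMod 2,
      sysEval M (fun i => y (L i)) = fun i => cshift y (L i) := by
    intro y
    funext i
    obtain ⟨S, hMS, hSnonempty⟩ := hSne i
    have h1 : sysEval M (fun i => y (L i)) i = ∏ j ∈ S, y (L j) := by
      simp [sysEval, hMS, monEval]
    have hLj : ∀ j ∈ S, y (L j) = cshift y (L i) := by
      intro j hj
      have : L j = ⟨((L i).val + 1) % t, Nat.mod_lt _ ht0⟩ :=
        Fin.ext (hedge i j ⟨S, hMS, hj⟩)
      rw [this]
      rfl
    rw [h1, Finset.prod_congr rfl hLj, Finset.prod_const]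
    rcases zmod2_cases (cshift y (L i)) with h | h <;> rw [h]
    · exact zero_pow (by simpa [Finset.card_eq_zero] using
        fun hc => (Finset.nonempty_iff_ne_empty.1 hSnonempty) hc)
    · exact one_pow _
  have hconjk : ∀ (k : ℕ) (y : Fin t → ZMod 2),
      (sysEval M)^[k] (fun i => y (L i)) = fun i => cshift^[k] y (L i) := by
    intro k
    induction k with
    | zero => exact fun y => rfl
    | succ k ih =>
      intro y
      rw [Function.iterate_succ_apply, hconj y, ih (cshift y)]
      funext i
      rw [← Function.iterate_succ_apply]
  -- assemble
  constructor
  · refine ⟨?_, ?_, ?_⟩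
    · rintro a ⟨N, hN, hfix⟩
      refine ⟨N, hN, ?_⟩
      rw [← Function.iterate_succ_apply, Function.iterate_succ_apply', hfix]
    · rintro a ⟨Na, hNa, hfa⟩ b ⟨Nb, hNb, hfb⟩ hab
      have ha2 : (sysEval M)^[Na * Nb] a = a := by
        rw [Function.iterate_mul]; exact Function.iterate_fixed hfa Nb
      have hb2 : (sysEval M)^[Na * Nb] b = b := by
        rw [mul_comm, Function.iterate_mul]; exact Function.iterate_fixed hfb Na
      obtain ⟨k, hk⟩ : ∃ k, Na * Nb = k + 1 :=
        ⟨Na * Nb - 1, by have := Nat.mul_pos hNa hNb; omega⟩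
      rw [hk] at ha2 hb2
      calc a = (sysEval M)^[k + 1] a := ha2.symm
        _ = (sysEval M)^[k] (sysEval M a) := Function.iterate_succ_apply _ _ _
        _ = (sysEval M)^[k] (sysEval M b) := by rw [hab]
        _ = (sysEval M)^[k + 1] b := (Function.iterate_succ_apply _ _ _).symm
        _ = b := hb2
    · rintro a ⟨N, hN, hfix⟩
      refine ⟨(sysEval M)^[N - 1] a, ⟨N, hN, ?_⟩, ?_⟩
      · rw [← Function.iterate_add_apply, show N + (N - 1) = (N - 1) + N by omega,
          Function.iterate_add_apply, hfix]
      · show sysEval M ((sysEval M)^[N - 1] a) = a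
        rw [← Function.iterate_succ_apply' (sysEval M) (N - 1) a,
          show (N - 1).succ = N by omega, hfix]
  · refine ⟨fun y i => y (L i), ?_, ?_, ?_⟩
    · intro y y' h
      funext c
      obtain ⟨i, hi⟩ := hLsurj c
      have h2 : y (L i) = y' (L i) := congrFun h i
      rwa [hi] at h2
    · apply Set.Subset.antisymm
      · rintro a ⟨y, rfl⟩
        refine ⟨t, ht, ?_⟩
        show (sysEval M)^[t] (fun i => y (L i)) = fun i => y (L i)
        rw [hconjk t y, cshift_t]
      · intro a ha
        choose rep hrep using hLsurj
        refine ⟨fun c => a (rep c), ?_⟩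
        show (fun i => a (rep (L i))) = a
        funext i
        exact hPeq a ha (rep (L i)) i (hrep (L i))
    · intro y
      exact hconj y
end

section
/- Let f : 𝔽₂^r → 𝔽₂^r be a Boolean monomial fixed point system with dependency graph 𝒳, let g : 𝔽₂^s → 𝔽₂^s be a Boolean monomial system whose dependency graph 𝒴 is strongly connected with loop number ≥ 1, and let f # g be a glueing with dependency graph 𝒳 # 𝒴. Then f # g is a fixed point system if and only if at least one of the following holds: (1) some vertex of 𝒴 is connected in 𝒳 # 𝒴 by a walk to a zero of 𝒳; (2) g is a fixed point system. -/
/-!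
The `x`-part of `f # g` is an autonomous copy of `f`, so it settles at a fixed point `x*`, after
which the `y`-part evolves by `y ↦ g(y) · τ(x*)`, where `τ_i` is the glueing monomial of `y_i`.
If some `τ_i(x*)` vanishes, or some vertex of `𝒴` has a walk to a zero of `𝒳`, then one
`y`-variable vanishes for good; zeros propagate backwards along walks, so by strong connectivity
the whole `y`-part dies and the orbit is fixed. Otherwise the `y`-part eventually runs `g` itself.
Conversely, if no vertex of `𝒴` reaches a zero of `𝒳`, start with all `x`-variables equal to `1`:
those read by `𝒴` stay `1`, so the `y`-part is exactly an orbit of `g`.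
-/

open Filter Function Relation

section Walks

variable {V : Type*} {E : V → V → Prop}

theorem reflTransGen_iff_exists_hasWalk {a b : V} :
    ReflTransGen E a b ↔ ∃ m, hasWalk E m a b := by
  constructor
  · intro h
    induction h using ReflTransGen.head_induction_on with
    | refl => exact ⟨0, rfl⟩
    | head hac _ ih =>
      obtain ⟨m, hm⟩ := ih
      exact ⟨m + 1, _, hac, hm⟩
  · rintro ⟨m, hm⟩
    induction m generalizing a with
    | zero => exact (show a = b from hm) ▸ ReflTransGen.refl
    | succ m ih =>
      obtain ⟨c, hac, hcb⟩ := hm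
      exact ReflTransGen.head hac (ih hcb)

theorem exists_rel_of_one_le_loopNumAt {a : V} (h : 1 ≤ loopNumAt E a) : ∃ b, E a b := by
  obtain ⟨t, ht, p, q, hp, -, rfl⟩ := Nat.nonempty_of_pos_sInf h
  obtain ⟨n, hn⟩ : ∃ n, q + t = n + 1 := ⟨q + t - 1, by omega⟩
  rw [hn] at hp
  obtain ⟨b, hab, -⟩ := hp
  exact ⟨b, hab⟩

end Walks

section MonomialSystem

variable {ι : Type*} {G : ι → Option (Finset ι)}

theorem sysEval_eq_zero_of_depEdge {i j : ι} {z : ι → ZMod 2} (h : depEdge G i j)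
    (hz : z j = 0) : sysEval G z i = 0 := by
  obtain ⟨S, hS, hj⟩ := h
  simp only [sysEval, hS, monEval]
  exact Finset.prod_eq_zero hj hz

theorem eventually_iterate_sysEval_eq_zero {w : ι → ZMod 2} {i j : ι}
    (h : ReflTransGen (depEdge G) i j) (hj : ∀ᶠ t in atTop, (sysEval G)^[t] w j = 0) :
    ∀ᶠ t in atTop, (sysEval G)^[t] w i = 0 := by
  induction h using ReflTransGen.head_induction_on with
  | refl => exact hj
  | head hik _ ih =>
    rw [← map_add_atTop_eq_nat 1]
    refine eventually_map.2 (ih.mono fun t ht => ?_)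
    rw [iterate_succ_apply']
    exact sysEval_eq_zero_of_depEdge hik ht

theorem iterate_sysEval_one_eq_one {R : Set ι} (hzero : ∀ i ∈ R, G i ≠ none)
    (hclosed : ∀ i ∈ R, ∀ j, depEdge G i j → j ∈ R) (t : ℕ) :
    ∀ i ∈ R, (sysEval G)^[t] 1 i = 1 := by
  induction t with
  | zero => exact fun _ _ => rfl
  | succ t ih =>
    intro i hi
    obtain ⟨S, hS⟩ := Option.ne_none_iff_exists'.1 (hzero i hi)
    rw [iterate_succ_apply']
    simp only [sysEval, hS, monEval]
    exact Finset.prod_eq_one fun j hj => ih j (hclosed i hi j ⟨S, hS, hj⟩)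

end MonomialSystem

section FixedPoints

variable {α : Type*} {F : α → α}

theorem fixedPointSystem_iff : FixedPointSystem F ↔ ∀ a, ∃ m, IsFixedPt F (F^[m] a) := by
  simp only [FixedPointSystem, IsFixedPt, iterate_succ_apply']

theorem FixedPointSystem.exists_eventually_iterate_eq (hF : FixedPointSystem F) (a : α) :
    ∃ b, IsFixedPt F b ∧ ∀ᶠ t in atTop, F^[t] a = b := by
  obtain ⟨m, hm⟩ := fixedPointSystem_iff.1 hF a
  refine ⟨_, hm, eventually_atTop.2 ⟨m, fun t ht => ?_⟩⟩
  rw [← Nat.sub_add_cancel ht, iterate_add_apply]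
  exact iterate_fixed hm _

end FixedPoints

section Glue

variable {r s : ℕ} (M₁ : Fin r → Option (Finset (Fin r)))
  (M₂ : Fin s → Option (Finset (Fin s))) (T : Fin s → Finset (Fin r))

theorem sysEval_glue (z : Fin r ⊕ Fin s → ZMod 2) :
    sysEval (glue M₁ M₂ T) z = Sum.elim (sysEval M₁ (z ∘ Sum.inl))
      (fun i => sysEval M₂ (z ∘ Sum.inr) i * ∏ k ∈ T i, z (Sum.inl k)) := by
  funext v
  rcases v with j | i
  · cases h : M₁ j <;>
      simp [sysEval, glue, monEval, h, Finset.prod_image Sum.inl_injective.injOn]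
  · cases h : M₂ i with
    | none => simp [sysEval, glue, monEval, h]
    | some S =>
      simp only [sysEval, glue, monEval, h, Option.map_some, Sum.elim_inr]
      rw [Finset.prod_union (Finset.disjoint_left.2 (by simp)),
        Finset.prod_image Sum.inr_injective.injOn, Finset.prod_image Sum.inl_injective.injOn]
      rfl

theorem iterate_sysEval_glue_comp_inl (t : ℕ) (z : Fin r ⊕ Fin s → ZMod 2) :
    (sysEval (glue M₁ M₂ T))^[t] z ∘ Sum.inl = (sysEval M₁)^[t] (z ∘ Sum.inl) :=
  Semiconj.iterate_right (f := (· ∘ Sum.inl))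
    (fun z => by simp only [sysEval_glue, Sum.elim_comp_inl]) t z

theorem iterate_sysEval_glue_comp_inr (w : Fin r ⊕ Fin s → ZMod 2)
    (hτ : ∀ t i, ∏ k ∈ T i, (sysEval M₁)^[t] (w ∘ Sum.inl) k = 1) (t : ℕ) :
    (sysEval (glue M₁ M₂ T))^[t] w ∘ Sum.inr = (sysEval M₂)^[t] (w ∘ Sum.inr) := by
  induction t with
  | zero => rfl
  | succ t ih =>
    funext i
    have hx := congrFun (iterate_sysEval_glue_comp_inl M₁ M₂ T t w)
    simp only [comp_apply] at hx
    rw [comp_apply, iterate_succ_apply', iterate_succ_apply', sysEval_glue, Sum.elim_inr,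
      ih]
    simp only [hx, hτ, mul_one]

variable {M₁ M₂ T}

theorem isFixedPt_sysEval_glue_iff {z : Fin r ⊕ Fin s → ZMod 2} :
    IsFixedPt (sysEval (glue M₁ M₂ T)) z ↔ IsFixedPt (sysEval M₁) (z ∘ Sum.inl) ∧
      ∀ i, sysEval M₂ (z ∘ Sum.inr) i * ∏ k ∈ T i, z (Sum.inl k) = z (Sum.inr i) := by
  simp only [IsFixedPt, sysEval_glue, funext_iff, Sum.forall, Sum.elim_inl, Sum.elim_inr,
    comp_apply]

theorem depEdge_glue_inl_inl {j k : Fin r} (h : depEdge M₁ j k) :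
    depEdge (glue M₁ M₂ T) (Sum.inl j) (Sum.inl k) := by
  obtain ⟨S, hS, hk⟩ := h
  exact ⟨_, by simp [glue, hS], Finset.mem_image_of_mem _ hk⟩

theorem depEdge_glue_inr_inr {i j : Fin s} (h : depEdge M₂ i j) :
    depEdge (glue M₁ M₂ T) (Sum.inr i) (Sum.inr j) := by
  obtain ⟨S, hS, hj⟩ := h
  exact ⟨S.image Sum.inr ∪ (T i).image Sum.inl, by simp [glue, hS],
    Finset.mem_union_left _ (Finset.mem_image_of_mem _ hj)⟩

theorem depEdge_glue_inr_inl {i : Fin s} {k : Fin r} (hi : M₂ i ≠ none) (hk : k ∈ T i) :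
    depEdge (glue M₁ M₂ T) (Sum.inr i) (Sum.inl k) := by
  obtain ⟨S, hS⟩ := Option.ne_none_iff_exists'.1 hi
  exact ⟨S.image Sum.inr ∪ (T i).image Sum.inl, by simp [glue, hS],
    Finset.mem_union_right _ (Finset.mem_image_of_mem _ hk)⟩

/-- A state with vanishing `y`-part over a fixed `x`-part is fixed, because every `y`-monomial
contains a `y`-variable. -/
theorem exists_isFixedPt_iterate_of_eventually_eq_zero (hf : FixedPointSystem (sysEval M₁))
    (hsc : StronglyConnected (depEdge M₂)) (hout : ∀ i, ∃ j, depEdge M₂ i j)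
    (a : Fin r ⊕ Fin s → ZMod 2) (c : Fin s)
    (hc : ∀ᶠ t in atTop, (sysEval (glue M₁ M₂ T))^[t] a (Sum.inr c) = 0) :
    ∃ m, IsFixedPt (sysEval (glue M₁ M₂ T)) ((sysEval (glue M₁ M₂ T))^[m] a) := by
  have hy : ∀ᶠ t in atTop, ∀ i, (sysEval (glue M₁ M₂ T))^[t] a (Sum.inr i) = 0 := by
    refine eventually_all.2 fun i => eventually_iterate_sysEval_eq_zero ?_ hc
    exact (reflTransGen_iff_exists_hasWalk.2 (hsc i c)).lift _ fun _ _ => depEdge_glue_inr_inr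
  obtain ⟨xs, hxs, hx⟩ := hf.exists_eventually_iterate_eq (a ∘ Sum.inl)
  obtain ⟨m, hxm, hym⟩ := (hx.and hy).exists
  rw [← iterate_sysEval_glue_comp_inl M₁ M₂ T] at hxm
  refine ⟨m, isFixedPt_sysEval_glue_iff.2 ⟨hxm ▸ hxs, fun i => ?_⟩⟩
  obtain ⟨j, hj⟩ := hout i
  rw [hym, sysEval_eq_zero_of_depEdge hj (hym j), zero_mul]

theorem fixedPointSystem_glue_of_reaches_zero (hf : FixedPointSystem (sysEval M₁))
    (hsc : StronglyConnected (depEdge M₂)) (hout : ∀ i, ∃ j, depEdge M₂ i j) {b : Fin s}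
    {j : Fin r} (hj : M₁ j = none)
    (hb : ReflTransGen (depEdge (glue M₁ M₂ T)) (Sum.inr b) (Sum.inl j)) :
    FixedPointSystem (sysEval (glue M₁ M₂ T)) := by
  refine fixedPointSystem_iff.2 fun a => exists_isFixedPt_iterate_of_eventually_eq_zero hf hsc
    hout a b (eventually_iterate_sysEval_eq_zero hb ?_)
  rw [← map_add_atTop_eq_nat 1]
  refine eventually_map.2 (Eventually.of_forall fun t => ?_)
  rw [iterate_succ_apply', sysEval_glue, Sum.elim_inl]
  simp [sysEval, monEval, hj]

theorem fixedPointSystem_glue_of_fixedPointSystem (hf : FixedPointSystem (sysEval M₁))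
    (hsc : StronglyConnected (depEdge M₂)) (hout : ∀ i, ∃ j, depEdge M₂ i j)
    (hg : FixedPointSystem (sysEval M₂)) : FixedPointSystem (sysEval (glue M₁ M₂ T)) := by
  refine fixedPointSystem_iff.2 fun a => ?_
  obtain ⟨xs, hxs, hx⟩ := hf.exists_eventually_iterate_eq (a ∘ Sum.inl)
  simp only [← iterate_sysEval_glue_comp_inl M₁ M₂ T] at hx
  set F := sysEval (glue M₁ M₂ T)
  by_cases hτ : ∀ i, ∏ k ∈ T i, xs k = 1
  · obtain ⟨m, hm⟩ := eventually_atTop.1 hx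
    have hw : ∀ t, (F^[t] (F^[m] a)) ∘ Sum.inl = xs := fun t => by
      rw [← iterate_add_apply, hm _ le_add_self]
    have hy := iterate_sysEval_glue_comp_inr M₁ M₂ T (F^[m] a) fun t i => by
      rw [← iterate_sysEval_glue_comp_inl, hw, hτ]
    obtain ⟨m', hm'⟩ := fixedPointSystem_iff.1 hg (F^[m] a ∘ Sum.inr)
    refine ⟨m' + m, ?_⟩
    rw [iterate_add_apply]
    refine isFixedPt_sysEval_glue_iff.2 ⟨(hw m').symm ▸ hxs, fun i => ?_⟩
    have hτi := hτ i
    simp only [← hw m', comp_apply] at hτi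
    rw [hτi, mul_one, hy, hm'.eq, ← hy]
    rfl
  · obtain ⟨i, hi⟩ := not_forall.1 hτ
    have hi0 : ∏ k ∈ T i, xs k = 0 := (by decide : ∀ z : ZMod 2, z ≠ 1 → z = 0) _ hi
    refine exists_isFixedPt_iterate_of_eventually_eq_zero hf hsc hout a i ?_
    rw [← map_add_atTop_eq_nat 1]
    refine eventually_map.2 (hx.mono fun t ht => ?_)
    rw [iterate_succ_apply', sysEval_glue, Sum.elim_inr]
    simp only [← ht, comp_apply] at hi0
    rw [hi0, mul_zero]

theorem fixedPointSystem_of_fixedPointSystem_glue (hout : ∀ i, ∃ j, depEdge M₂ i j)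
    (hF : FixedPointSystem (sysEval (glue M₁ M₂ T)))
    (hno : ∀ b j, ReflTransGen (depEdge (glue M₁ M₂ T)) (Sum.inr b) (Sum.inl j) → M₁ j ≠ none) :
    FixedPointSystem (sysEval M₂) := by
  refine fixedPointSystem_iff.2 fun y => ?_
  set R := {j | ∃ b, ReflTransGen (depEdge (glue M₁ M₂ T)) (Sum.inr b) (Sum.inl j)}
  -- the `x`-variables seen from `𝒴` avoid the zeros of `𝒳`, so started at `1` they stay `1`
  have hR : ∀ t, ∀ j ∈ R, (sysEval M₁)^[t] 1 j = 1 := iterate_sysEval_one_eq_one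
    (fun j ⟨b, hb⟩ => hno b j hb) fun _ ⟨b, hb⟩ _ hk => ⟨b, hb.tail (depEdge_glue_inl_inl hk)⟩
  have hTR : ∀ i, ∀ k ∈ T i, k ∈ R := fun i k hk => by
    obtain ⟨-, S, hS, -⟩ := hout i
    exact ⟨i, .single (depEdge_glue_inr_inl (by simp [hS]) hk)⟩
  have hτ : ∀ t i, ∏ k ∈ T i, (sysEval M₁)^[t] 1 k = 1 := fun t i =>
    Finset.prod_eq_one fun k hk => hR t k (hTR i k hk)
  obtain ⟨m, hm⟩ := fixedPointSystem_iff.1 hF (Sum.elim 1 y)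
  have hy := iterate_sysEval_glue_comp_inr M₁ M₂ T (Sum.elim 1 y) hτ m
  have hx := iterate_sysEval_glue_comp_inl M₁ M₂ T m (Sum.elim 1 y)
  rw [Sum.elim_comp_inl] at hx
  rw [Sum.elim_comp_inr] at hy
  refine ⟨m, hy ▸ ?_⟩
  funext i
  have hτm : ∏ k ∈ T i, (sysEval (glue M₁ M₂ T))^[m] (Sum.elim 1 y) (Sum.inl k) = 1 := by
    simpa only [← hx, comp_apply] using hτ m i
  simpa only [hτm, mul_one, comp_apply] using (isFixedPt_sysEval_glue_iff.1 hm).2 i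

end Glue

theorem statement14_general {r s : ℕ}
    (M₁ : Fin r → Option (Finset (Fin r))) (M₂ : Fin s → Option (Finset (Fin s)))
    (T : Fin s → Finset (Fin r))
    (hf : FixedPointSystem (sysEval M₁))
    (hsc : StronglyConnected (depEdge M₂))
    (hloop : ∀ b : Fin s, 1 ≤ loopNumAt (depEdge M₂) b) :
    FixedPointSystem (sysEval (glue M₁ M₂ T)) ↔
      ((∃ (b : Fin s) (j : Fin r) (ℓ : ℕ), M₁ j = none ∧
          hasWalk (depEdge (glue M₁ M₂ T)) ℓ (Sum.inr b) (Sum.inl j)) ∨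
        FixedPointSystem (sysEval M₂)) := by
  have hout : ∀ i, ∃ j, depEdge M₂ i j := fun i => exists_rel_of_one_le_loopNumAt (hloop i)
  constructor
  · refine fun hF => or_iff_not_imp_left.2 fun hno =>
      fixedPointSystem_of_fixedPointSystem_glue hout hF fun b j hb hj => ?_
    obtain ⟨ℓ, hw⟩ := reflTransGen_iff_exists_hasWalk.1 hb
    exact hno ⟨b, j, ℓ, hj, hw⟩
  · rintro (⟨b, j, ℓ, hj, hw⟩ | hg)
    · exact fixedPointSystem_glue_of_reaches_zero hf hsc hout hj
        (reflTransGen_iff_exists_hasWalk.2 ⟨ℓ, hw⟩)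
    · exact fixedPointSystem_glue_of_fixedPointSystem hf hsc hout hg

/-- Let `f` be a Boolean monomial fixed point system and `g` a
Boolean monomial system whose dependency graph 𝒴 is strongly connected with
loop number `≥ 1`. A glueing `f # g` is a fixed point system iff either some
vertex of 𝒴 has a walk in 𝒳 # 𝒴 to a zero of 𝒳, or `g` is a fixed point
system. -/
theorem statement14 {r s : ℕ} (hr : 1 ≤ r) (hs : 1 ≤ s)
    (M₁ : Fin r → Option (Finset (Fin r))) (M₂ : Fin s → Option (Finset (Fin s)))
    (T : Fin s → Finset (Fin r))
    (hf : FixedPointSystem (sysEval M₁))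
    (hsc : StronglyConnected (depEdge M₂))
    (hloop : ∀ b : Fin s, 1 ≤ loopNumAt (depEdge M₂) b) :
    FixedPointSystem (sysEval (glue M₁ M₂ T)) ↔
      ((∃ (b : Fin s) (j : Fin r) (ℓ : ℕ), M₁ j = none ∧
          hasWalk (depEdge (glue M₁ M₂ T)) ℓ (Sum.inr b) (Sum.inl j)) ∨
        FixedPointSystem (sysEval M₂)) :=
  statement14_general M₁ M₂ T hf hsc hloop
end

section
/- Let f : 𝔽₂^r → 𝔽₂^r be a Boolean monomial fixed point system and let g : 𝔽₂ → 𝔽₂ be a Boolean monomial system whose dependency graph 𝒴 is a single vertex with loop number 0 (i.e. g is the constant 0 or the constant 1). Then every glueing f # g is a fixed point system. -/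
lemma glue_inl {r s : ℕ} (M₁ : Fin r → Option (Finset (Fin r)))
    (M₂ : Fin s → Option (Finset (Fin s))) (T : Fin s → Finset (Fin r))
    (z : (Fin r ⊕ Fin s) → ZMod 2) :
    (fun j => sysEval (glue M₁ M₂ T) z (Sum.inl j)) =
      sysEval M₁ (fun j => z (Sum.inl j)) := by
  funext i
  simp only [sysEval, glue]
  cases h : M₁ i with
  | none => simp [monEval]
  | some S =>
      simp only [Option.map_some, monEval]
      exact Finset.prod_image (fun a _ b _ h => Sum.inl.inj h)

lemma glue_iter_inl {r s : ℕ} (M₁ : Fin r → Option (Finset (Fin r)))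
    (M₂ : Fin s → Option (Finset (Fin s))) (T : Fin s → Finset (Fin r))
    (a : (Fin r ⊕ Fin s) → ZMod 2) (k : ℕ) :
    (fun j => (sysEval (glue M₁ M₂ T))^[k] a (Sum.inl j)) =
      (sysEval M₁)^[k] (fun j => a (Sum.inl j)) := by
  induction k with
  | zero => rfl
  | succ k ih =>
      rw [Function.iterate_succ_apply', Function.iterate_succ_apply', ← ih,
        glue_inl]

/-- Let `f` be a Boolean monomial fixed point system and let
`g : 𝔽₂ → 𝔽₂` be a Boolean monomial system whose dependency graph is a single
vertex of loop number 0 (i.e. `g` is the constant 0 or the constant 1). Then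
every glueing `f # g` is a fixed point system. -/
theorem statement15 {r : ℕ} (hr : 1 ≤ r)
    (M₁ : Fin r → Option (Finset (Fin r)))
    (hf : FixedPointSystem (sysEval M₁))
    (M₂ : Fin 1 → Option (Finset (Fin 1)))
    (hg : M₂ 0 = none ∨ M₂ 0 = some ∅)
    (T : Fin 1 → Finset (Fin r)) :
    FixedPointSystem (sysEval (glue M₁ M₂ T)) := by
  intro a
  obtain ⟨m, hm⟩ := hf (fun j => a (Sum.inl j))
  refine ⟨m + 1, ?_⟩
  set F := sysEval (glue M₁ M₂ T) with hF
  funext v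
  cases v with
  | inl j =>
      have h1 := congrFun (glue_iter_inl M₁ M₂ T a (m + 1 + 1)) j
      have h2 := congrFun (glue_iter_inl M₁ M₂ T a (m + 1)) j
      rw [h1, h2, Function.iterate_succ_apply' (sysEval M₁) (m+1), hm,
        ← Function.iterate_succ_apply' (sysEval M₁) m, hm]
  | inr i =>
      have hi : i = 0 := Subsingleton.elim i 0
      subst hi
      conv_lhs => rw [Function.iterate_succ_apply' F (m+1)]
      conv_rhs => rw [Function.iterate_succ_apply' F m]
      show monEval (glue M₁ M₂ T (Sum.inr 0)) (F^[m+1] a)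
        = monEval (glue M₁ M₂ T (Sum.inr 0)) (F^[m] a)
      rcases hg with h | h
      · simp [glue, h, monEval]
      · simp only [glue, h, Option.map_some, Finset.image_empty,
          Finset.empty_union, monEval]
        rw [Finset.prod_image (fun a _ b _ h => Sum.inl.inj h),
          Finset.prod_image (fun a _ b _ h => Sum.inl.inj h)]
        apply Finset.prod_congr rfl
        intro j _
        have h1 := congrFun (glue_iter_inl M₁ M₂ T a (m + 1)) j
        have h2 := congrFun (glue_iter_inl M₁ M₂ T a m) j
        rw [h1, h2, hm]
end

section
/- Let f be a Boolean monomial system with dependency graph 𝒳. Then f is a fixed point system if and only if for every vertex a of 𝒳 at least one of the following holds: (a) there exist closed walks p, q at a with |q| = |p| + 1; (b) there is a walk from a to a zero; (c) there is no closed walk of length ≥ 1 at a. -/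
/-!
The `i`-th coordinate of `f^[m] x` is `1` exactly when no zero is reachable from `i` in fewer
than `m` steps and `x` is `1` at the end of every walk of length `m` from `i`.

If `a` lies on a cycle of length `ℓ`, reaches no zero and has no closed walks of consecutive
lengths, start from the point vanishing only at `a`: after `m * ℓ` steps the `a`-coordinate is `0`
and one step later it is `1`, for every `m`, so the orbit never reaches a fixed point.

Conversely, closed walks of lengths `p` and `p + 1` at `v` give closed walks at `v` of every
length `≥ p * p`. A walk of length at least `n` passes twice through some vertex `v`, and pumping
such a closed walk at `v` shows that, once no zero is reachable from `i`, every endpoint of a walk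
of length `k ≥ n` from `i` is also an endpoint of one of length `k + t` for all large `t`. Hence
the `i`-th coordinate of the orbit can only switch from `1` to `0` along such steps, and so it is
eventually constant.
-/

open Filter

section Walks

variable {V : Type*} {E : V → V → Prop}

lemma hasWalk_zero_iff {a b : V} : hasWalk E 0 a b ↔ a = b := Iff.rfl

lemma hasWalk_succ_iff {m : ℕ} {a b : V} :
    hasWalk E (m + 1) a b ↔ ∃ c, E a c ∧ hasWalk E m c b := Iff.rfl

lemma hasWalk.add {p q : ℕ} {a b c : V} (h₁ : hasWalk E p a b) (h₂ : hasWalk E q b c) :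
    hasWalk E (p + q) a c := by
  induction p generalizing a with
  | zero => rw [hasWalk_zero_iff] at h₁; subst h₁; simpa using h₂
  | succ p ih =>
    obtain ⟨d, hd, hw⟩ := h₁
    rw [Nat.add_right_comm]
    exact ⟨d, hd, ih hw⟩

lemma hasWalk.mul {p : ℕ} {v : V} (h : hasWalk E p v v) (a : ℕ) : hasWalk E (a * p) v v := by
  induction a with
  | zero => rw [Nat.zero_mul, hasWalk_zero_iff]
  | succ a ih => rw [Nat.succ_mul]; exact ih.add h

lemma exists_eq_mul_add_mul_succ {p t : ℕ} (h : p * p ≤ t) : ∃ a b, t = a * p + b * (p + 1) := by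
  rcases Nat.eq_zero_or_pos p with rfl | hp
  · exact ⟨0, t, by simp⟩
  obtain ⟨d, hd⟩ : ∃ d, t / p = t % p + d :=
    Nat.exists_eq_add_of_le ((Nat.mod_lt t hp).le.trans ((Nat.le_div_iff_mul_le hp).2 h))
  refine ⟨d, t % p, ?_⟩
  have := Nat.div_add_mod t p
  rw [hd] at this
  linarith

lemma eventually_hasWalk_of_succ {p : ℕ} {v : V} (hp : hasWalk E p v v)
    (hp' : hasWalk E (p + 1) v v) : ∀ᶠ t in atTop, hasWalk E t v v := by
  refine eventually_atTop.2 ⟨p * p, fun t ht => ?_⟩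
  obtain ⟨a, b, rfl⟩ := exists_eq_mul_add_mul_succ ht
  exact (hp.mul a).add (hp'.mul b)

lemma hasWalk.exists_seq {k : ℕ} {a b : V} (h : hasWalk E k a b) :
    ∃ w : ℕ → V, w 0 = a ∧ w k = b ∧ ∀ i < k, E (w i) (w (i + 1)) := by
  induction k generalizing a with
  | zero => exact ⟨fun _ => a, rfl, h, by simp⟩
  | succ k ih =>
    obtain ⟨c, hc, hw⟩ := h
    obtain ⟨w, hw0, hwk, hE⟩ := ih hw
    refine ⟨fun i => Nat.casesOn i a w, rfl, hwk, fun i hi => ?_⟩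
    cases i with
    | zero => simpa [hw0] using hc
    | succ i => exact hE i (by omega)

lemma hasWalk_of_seq {k : ℕ} (w : ℕ → V) (hw : ∀ i < k, E (w i) (w (i + 1))) {i d : ℕ}
    (h : i + d ≤ k) : hasWalk E d (w i) (w (i + d)) := by
  induction d generalizing i with
  | zero => rfl
  | succ d ih =>
    refine ⟨w (i + 1), hw i (by omega), ?_⟩
    simpa only [Nat.add_right_comm, Nat.add_assoc] using ih (i := i + 1) (by omega)

lemma hasWalk.exists_cycle [Fintype V] {k : ℕ} {a b : V} (hk : Fintype.card V ≤ k)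
    (h : hasWalk E k a b) :
    ∃ v s c r, 1 ≤ c ∧ s + c + r = k ∧
      hasWalk E s a v ∧ hasWalk E c v v ∧ hasWalk E r v b := by
  obtain ⟨w, rfl, rfl, hE⟩ := h.exists_seq
  obtain ⟨i, j, hij, heq⟩ := Fintype.exists_ne_map_eq_of_card_lt (fun i : Fin (k + 1) => w i)
    (by simpa using Nat.lt_succ_of_le hk)
  wlog hlt : i < j generalizing i j
  · exact this j i hij.symm heq.symm (lt_of_le_of_ne (not_lt.1 hlt) hij.symm)
  have hlt : (i : ℕ) < j := hlt
  have hj := j.is_le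
  refine ⟨w i, i, j - i, k - j, by omega, by omega, ?_, ?_, ?_⟩
  · simpa using hasWalk_of_seq w hE (i := 0) (d := i) (by omega)
  · simpa [heq, Nat.add_sub_cancel' hlt.le] using
      hasWalk_of_seq w hE (i := i) (d := j - i) (by omega)
  · simpa [heq, Nat.add_sub_cancel' hj] using hasWalk_of_seq w hE (i := j) (d := k - j) (by omega)

lemma hasWalk.add_of_card_le [Fintype V] {k t : ℕ} {a b : V}
    (ht : ∀ v, (∃ s, hasWalk E s a v) → (∃ c, 1 ≤ c ∧ hasWalk E c v v) → hasWalk E t v v)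
    (hk : Fintype.card V ≤ k) (h : hasWalk E k a b) : hasWalk E (k + t) a b := by
  obtain ⟨v, s, c, r, hc, rfl, hs, hcyc, hr⟩ := h.exists_cycle hk
  have hpump := (hs.add (ht v ⟨s, hs⟩ ⟨c, hc, hcyc⟩)).add (hcyc.add hr)
  convert hpump using 1
  ring

end Walks

lemma eventually_succ_iff_of_add_imp {u : ℕ → Prop} {K T : ℕ}
    (h : ∀ k ≥ K, ∀ t ≥ T, u (k + t) → u k) : ∀ᶠ k in atTop, (u (k + 1) ↔ u k) := by
  by_cases hfalse : ∃ k ≥ K, ¬ u k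
  · obtain ⟨k, hk, hu⟩ := hfalse
    have hoff : ∀ j ≥ k + T, ¬ u j := fun j hj huj =>
      hu (h k hk (j - k) (by omega) (by rwa [Nat.add_sub_cancel' (by omega)]))
    exact eventually_atTop.2 ⟨k + T, fun j hj => iff_of_false (hoff _ (by omega)) (hoff j hj)⟩
  · push Not at hfalse
    exact eventually_atTop.2 ⟨K, fun j hj => iff_of_true (hfalse _ (by omega)) (hfalse j hj)⟩

lemma ZMod.two_eq_of_eq_one_iff {a b : ZMod 2} (h : a = 1 ↔ b = 1) : a = b := by
  revert a b; decide

section Monomial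

variable {ι : Type*} (M : ι → Option (Finset ι))

lemma sysEval_eq_one_iff (y : ι → ZMod 2) (i : ι) :
    sysEval M y i = 1 ↔ M i ≠ none ∧ ∀ j, depEdge M i j → y j = 1 := by
  rcases hMi : M i with _ | S <;> simp [sysEval, monEval, hMi, depEdge]

lemma iterate_sysEval_eq_one_iff (x : ι → ZMod 2) (m : ℕ) (i : ι) :
    (sysEval M)^[m] x i = 1 ↔
      (∀ k < m, ∀ j, hasWalk (depEdge M) k i j → M j ≠ none) ∧
        ∀ j, hasWalk (depEdge M) m i j → x j = 1 := by
  induction m generalizing i with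
  | zero => simp [hasWalk_zero_iff]
  | succ m ih =>
    rw [Function.iterate_succ_apply', sysEval_eq_one_iff]
    simp only [ih, Nat.forall_lt_succ_left', hasWalk_succ_iff, hasWalk_zero_iff]
    simp only [forall_eq', forall_exists_index, and_imp, imp_and, forall_and]
    constructor
    · rintro ⟨h0, h1, h2⟩
      exact ⟨⟨h0, fun k hk j c hc hw => h1 c hc k hk j hw⟩, fun j c hc hw => h2 c hc j hw⟩
    · rintro ⟨⟨h0, h1⟩, h2⟩
      exact ⟨h0, fun c hc k hk j hw => h1 k hk j c hc hw, fun c hc j hw => h2 j c hc hw⟩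

theorem FixedPointSystem.exists_hasWalk_succ (hf : FixedPointSystem (sysEval M)) {a : ι}
    {ℓ : ℕ} (hzero : ∀ j ℓ, hasWalk (depEdge M) ℓ a j → M j ≠ none) (hℓ : 1 ≤ ℓ)
    (ha : hasWalk (depEdge M) ℓ a a) :
    ∃ p, hasWalk (depEdge M) p a a ∧ hasWalk (depEdge M) (p + 1) a a := by
  classical
  by_contra! hne
  let x : ι → ZMod 2 := fun j => if j = a then 0 else 1
  obtain ⟨m, hm⟩ := hf x
  have hstable : ∀ k ≥ m, (sysEval M)^[k] x = (sysEval M)^[m] x := fun k hk => by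
    have hfix : Function.IsFixedPt (sysEval M) ((sysEval M)^[m] x) :=
      (Function.iterate_succ_apply' _ _ _).symm.trans hm
    rw [← Nat.sub_add_cancel hk, Function.iterate_add_apply, (hfix.iterate _).eq]
  have hk : m ≤ m * ℓ := Nat.le_mul_of_pos_right m hℓ
  have h0 : (sysEval M)^[m * ℓ] x a ≠ 1 := fun h => by
    simpa [x] using ((iterate_sysEval_eq_one_iff M x _ a).1 h).2 a (ha.mul m)
  have h1 : (sysEval M)^[m * ℓ + 1] x a = 1 := by
    refine (iterate_sysEval_eq_one_iff M x _ a).2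
      ⟨fun k _ j hw => hzero j k hw, fun j hw => if_neg ?_⟩
    rintro rfl
    exact hne _ (ha.mul m) hw
  rw [hstable _ (by omega), ← hstable _ hk] at h1
  exact h0 h1

theorem fixedPointSystem_sysEval [Fintype ι]
    (h : ∀ a, (∀ j ℓ, hasWalk (depEdge M) ℓ a j → M j ≠ none) →
      (∃ ℓ, 1 ≤ ℓ ∧ hasWalk (depEdge M) ℓ a a) →
      ∃ p, hasWalk (depEdge M) p a a ∧ hasWalk (depEdge M) (p + 1) a a) :
    FixedPointSystem (sysEval M) := by
  intro x
  suffices ∀ i, ∀ᶠ k in atTop, (sysEval M)^[k + 1] x i = (sysEval M)^[k] x i by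
    obtain ⟨m, hm⟩ := (eventually_all.2 this).exists
    exact ⟨m, funext hm⟩
  intro i
  suffices ∃ K T, ∀ k ≥ K, ∀ t ≥ T,
      (sysEval M)^[k + t] x i = 1 → (sysEval M)^[k] x i = 1 by
    obtain ⟨K, T, hKT⟩ := this
    exact (eventually_succ_iff_of_add_imp (u := fun k => (sysEval M)^[k] x i = 1) hKT).mono
      fun _ => ZMod.two_eq_of_eq_one_iff
  by_cases hz : ∃ j ℓ, hasWalk (depEdge M) ℓ i j ∧ M j = none
  · obtain ⟨j, ℓ, hw, hj⟩ := hz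
    exact ⟨ℓ + 1, 0, fun k hk t _ h1 =>
      absurd hj (((iterate_sysEval_eq_one_iff M x _ i).1 h1).1 ℓ (by omega) j hw)⟩
  push Not at hz
  have hT : ∀ᶠ t in atTop, ∀ v, (∃ s, hasWalk (depEdge M) s i v) →
      (∃ c, 1 ≤ c ∧ hasWalk (depEdge M) c v v) → hasWalk (depEdge M) t v v := by
    refine eventually_all.2 fun v => ?_
    simp only [eventually_imp_distrib_left]
    rintro ⟨s, hs⟩ hc
    obtain ⟨p, hp, hp'⟩ := h v (fun j ℓ hw => hz j (s + ℓ) (hs.add hw)) hc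
    exact eventually_hasWalk_of_succ hp hp'
  obtain ⟨T, hT⟩ := eventually_atTop.1 hT
  refine ⟨Fintype.card ι, T, fun k hk t ht h1 => ?_⟩
  rw [iterate_sysEval_eq_one_iff] at h1 ⊢
  exact ⟨fun k' _ j hw => hz j k' hw, fun j hw => h1.2 j (hw.add_of_card_le (hT t ht) hk)⟩

end Monomial

theorem statement16_general {n : ℕ} (M : Fin n → Option (Finset (Fin n))) :
    FixedPointSystem (sysEval M) ↔
      ∀ a : Fin n,
        (∃ p q, hasWalk (depEdge M) p a a ∧ hasWalk (depEdge M) q a a ∧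
          q = p + 1) ∨
        (∃ j ℓ, M j = none ∧ hasWalk (depEdge M) ℓ a j) ∨
        (∀ ℓ, 1 ≤ ℓ → ¬ hasWalk (depEdge M) ℓ a a) := by
  refine ⟨fun hf a => ?_, fun h => fixedPointSystem_sysEval M fun a hzero ⟨ℓ, hℓ, ha⟩ => ?_⟩
  · by_cases hzero : ∃ j ℓ, M j = none ∧ hasWalk (depEdge M) ℓ a j
    · exact Or.inr (Or.inl hzero)
    by_cases hacyc : ∀ ℓ, 1 ≤ ℓ → ¬ hasWalk (depEdge M) ℓ a a
    · exact Or.inr (Or.inr hacyc)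
    push Not at hzero hacyc
    obtain ⟨ℓ, hℓ, ha⟩ := hacyc
    obtain ⟨p, hp, hp'⟩ := hf.exists_hasWalk_succ M (fun j ℓ hw hj => hzero j ℓ hj hw) hℓ ha
    exact Or.inl ⟨p, p + 1, hp, hp', rfl⟩
  · rcases h a with ⟨p, _, hp, hp', rfl⟩ | ⟨j, ℓ', hj, hw⟩ | hacyc
    · exact ⟨p, hp, hp'⟩
    · exact absurd hj (hzero j ℓ' hw)
    · exact absurd ha (hacyc ℓ hℓ)

/-- A Boolean monomial system `f` with dependency graph 𝒳 is a
fixed point system iff every vertex `a` of 𝒳 satisfies one of: (a) there are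
closed walks `p, q` at `a` with `|q| = |p| + 1`; (b) there is a walk from `a`
to a zero; (c) there is no closed walk of length `≥ 1` at `a`. -/
theorem statement16 {n : ℕ} (hn : 1 ≤ n) (M : Fin n → Option (Finset (Fin n))) :
    FixedPointSystem (sysEval M) ↔
      ∀ a : Fin n,
        (∃ p q, hasWalk (depEdge M) p a a ∧ hasWalk (depEdge M) q a a ∧
          q = p + 1) ∨
        (∃ j ℓ, M j = none ∧ hasWalk (depEdge M) ℓ a j) ∨
        (∀ ℓ, 1 ≤ ℓ → ¬ hasWalk (depEdge M) ℓ a a) :=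
  statement16_general M
end

section
/- Every triangular Boolean monomial system is a fixed point system. -/
/-- Every triangular Boolean monomial system (each `f i` involves
only the variables `x 1, …, x i`) is a fixed point system. -/
theorem statement17 {n : ℕ} (hn : 1 ≤ n) (M : Fin n → Option (Finset (Fin n)))
    (htri : ∀ (i : Fin n) (S : Finset (Fin n)), M i = some S → ∀ j ∈ S, j ≤ i) :
    FixedPointSystem (sysEval M) := by
  intro x
  set F := sysEval M with hF
  have key : ∀ i : Fin n, ∃ N, ∀ m, N ≤ m → F^[m+1] x i = F^[m] x i := by
    have main : ∀ k : ℕ, ∀ i : Fin n, i.val = k →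
        ∃ N, ∀ m, N ≤ m → F^[m+1] x i = F^[m] x i := by
      intro k
      induction k using Nat.strong_induction_on with
      | _ k IH =>
        intro i hik
        cases hM : M i with
        | none =>
          refine ⟨1, ?_⟩
          intro m hm
          obtain ⟨m', rfl⟩ : ∃ m', m = m' + 1 := ⟨m - 1, by omega⟩
          rw [Function.iterate_succ_apply' F (m'+1), Function.iterate_succ_apply' F m']
          simp [hF, sysEval, monEval, hM]
        | some S =>
          have hdep : ∀ j ∈ S, j ≤ i := htri i S hM
          have IH' : ∀ j : Fin n, j.val < i.val →
              ∃ N, ∀ m, N ≤ m → F^[m+1] x j = F^[m] x j := by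
            intro j hj
            exact IH j.val (hik ▸ hj) j rfl
          choose! N hN using IH'
          set N0 := Finset.univ.sup N with hN0
          have hNle : ∀ j : Fin n, N j ≤ N0 := fun j =>
            Finset.le_sup (Finset.mem_univ j)
          have hst : ∀ j : Fin n, j.val < i.val → ∀ m, N0 ≤ m →
              F^[m] x j = F^[N0] x j := by
            intro j hj m hm
            induction m, hm using Nat.le_induction with
            | base => rfl
            | succ m hm ih =>
              rw [hN j hj m (le_trans (hNle j) hm)]
              exact ih
          have heval : ∀ m, F^[m+1] x i = ∏ j ∈ S, F^[m] x j := by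
            intro m
            rw [Function.iterate_succ_apply' F m]
            simp [hF, sysEval, monEval, hM]
          have hltofmem : ∀ j ∈ S, j ≠ i → j.val < i.val := by
            intro j hj hji
            have := hdep j hj
            have : j < i := lt_of_le_of_ne this hji
            exact this
          by_cases hi : i ∈ S
          · have hsplit : ∀ m, N0 ≤ m →
                F^[m+1] x i = (∏ j ∈ S.erase i, F^[N0] x j) * F^[m] x i := by
              intro m hm
              rw [heval, ← Finset.prod_erase_mul _ _ hi]
              congr 1
              refine Finset.prod_congr rfl ?_
              intro j hj
              exact hst j (hltofmem j (Finset.mem_of_mem_erase hj)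
                (Finset.ne_of_mem_erase hj)) m hm
            refine ⟨N0 + 1, ?_⟩
            intro m hm
            obtain ⟨m', rfl⟩ : ∃ m', m = m' + 1 := ⟨m - 1, by omega⟩
            have hm' : N0 ≤ m' := by omega
            have hc : ∀ c : ZMod 2, c * c = c := by decide
            rw [hsplit (m'+1) (by omega), hsplit m' hm', ← mul_assoc, hc]
          · refine ⟨N0 + 1, ?_⟩
            intro m hm
            obtain ⟨m', rfl⟩ : ∃ m', m = m' + 1 := ⟨m - 1, by omega⟩
            rw [heval, heval]
            refine Finset.prod_congr rfl ?_
            intro j hj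
            have hji : j ≠ i := fun h => hi (h ▸ hj)
            have hlt := hltofmem j hj hji
            rw [hst j hlt (m'+1) (by omega), hst j hlt m' (by omega)]
    intro i
    exact main i.val i rfl
  choose N hN using key
  refine ⟨Finset.univ.sup N, ?_⟩
  funext i
  exact hN i _ (Finset.le_sup (Finset.mem_univ i))
end

section
/- Let f = (f_1, …, f_n) be a Boolean monomial fixed point system and let m = ∏_{j ∈ S} x_j be a monomial in the variables x_1, …, x_n (for some subset S ⊆ {1, …, n}). Then the Boolean monomial system m·f = (m·f_1, …, m·f_n) is a fixed point system. -/
lemma prod_zmod2_union {ι : Type*} [DecidableEq ι] (s t : Finset ι) (x : ι → ZMod 2) :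
    ∏ j ∈ s ∪ t, x j = (∏ j ∈ s, x j) * ∏ j ∈ t, x j := by
  by_cases h : ∀ j ∈ s ∪ t, x j = 1
  · rw [Finset.prod_eq_one h, Finset.prod_eq_one, Finset.prod_eq_one, one_mul]
    · intro j hj; exact h j (Finset.mem_union_right _ hj)
    · intro j hj; exact h j (Finset.mem_union_left _ hj)
  · push_neg at h
    obtain ⟨j, hj, hxj⟩ := h
    have hx0 : x j = 0 := (zmod2_cases (x j)).resolve_right hxj
    rw [Finset.prod_eq_zero hj hx0]
    rcases Finset.mem_union.mp hj with h' | h'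
    · rw [Finset.prod_eq_zero h' hx0, zero_mul]
    · rw [Finset.prod_eq_zero h' hx0, mul_zero]

lemma sysEval_mul {n : ℕ} (M : Fin n → Option (Finset (Fin n))) (S : Finset (Fin n))
    (x : Fin n → ZMod 2) (i : Fin n) :
    sysEval (fun i => (M i).map fun s => s ∪ S) x i = sysEval M x i * ∏ j ∈ S, x j := by
  unfold sysEval monEval
  cases h : M i with
  | none => simp [h]
  | some s => simp [h, prod_zmod2_union]

/-- If `f` is a Boolean monomial fixed point system and `m` is a
monomial `∏_{j ∈ S} x j`, then `m·f = (m·f 1, …, m·f n)` is a fixed point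
system. -/
theorem statement19 {n : ℕ} (hn : 1 ≤ n) (M : Fin n → Option (Finset (Fin n)))
    (hf : FixedPointSystem (sysEval M)) (S : Finset (Fin n)) :
    FixedPointSystem (sysEval fun i => (M i).map fun s => s ∪ S) := by
  set g := sysEval fun i => (M i).map fun s => s ∪ S with hg
  intro a
  by_cases hall : ∀ k, (∏ j ∈ S, (g^[k] a) j) = 1
  · have key : ∀ k, g^[k] a = (sysEval M)^[k] a := by
      intro k
      induction k with
      | zero => rfl
      | succ k ih =>
        rw [Function.iterate_succ_apply', Function.iterate_succ_apply', ← ih]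
        funext i
        rw [hg, sysEval_mul, hall k, mul_one]
    obtain ⟨m, hm⟩ := hf a
    exact ⟨m, by rw [key, key, hm]⟩
  · push_neg at hall
    obtain ⟨k, hk⟩ := hall
    have hk0 : (∏ j ∈ S, (g^[k] a) j) = 0 :=
      (zmod2_cases _).resolve_right hk
    have hSne : S.Nonempty := by
      rcases S.eq_empty_or_nonempty with rfl | h
      · simp at hk0
      · exact h
    have hzero : ∀ x : Fin n → ZMod 2, (∏ j ∈ S, x j) = 0 → g x = fun _ => 0 := by
      intro x hx
      funext i
      rw [hg, sysEval_mul, hx, mul_zero]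
    have h1 : g^[k + 1] a = fun _ => 0 := by
      rw [Function.iterate_succ_apply']
      exact hzero _ hk0
    refine ⟨k + 1, ?_⟩
    rw [Function.iterate_succ_apply', h1]
    apply hzero
    obtain ⟨j, hj⟩ := hSne
    exact Finset.prod_eq_zero hj rfl
end
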